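/- Let Ω ⊂ ℝᵈ be a bounded Lipschitz domain, p > d, and P : W^{2,p}(Ω; ℝᵈ) → ℝ a convex Gateaux-differentiable functional of the form y ↦ ∫_Ω P₀(∇²y) dx with P₀ convex and C¹. Let (y_k)_k ⊂ W^{2,p}(Ω; ℝᵈ) with y_k ⇀ y weakly in W^{2,p}(Ω; ℝᵈ), and assume lim_{k→∞} ⟨∂_G P₀(∇²y_k), ∇²(y − y_k)⟩_{L^{p'},L^p} = 0. Then ∂_G P₀(∇²y_k) ⇀ ∂_G P₀(∇²y) weakly in L^{p'}(Ω; ℝ^{d×d×d}). -/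

import Mathlib

open MeasureTheory Filter Topology
open scoped RealInnerProductSpace

/-!
Minty's trick. Convexity of `P₀` makes its gradient `DP₀` monotone. Testing monotonicity between
`g_k` and `g + t φ` and integrating gives
`t ∫ ⟪DP₀ g_k, φ⟫ ≤ ∫ ⟪DP₀ g_k, g_k - g⟫ - ∫ ⟪DP₀ (g + t φ), g_k - g⟫ + t ∫ ⟪DP₀ (g + t φ), φ⟫`.
The first term tends to `0` by hypothesis and the second by weak convergence, since the growth
bound puts `DP₀ (g + t φ)` in `L^{p'}`. Dividing by `t > 0` and by `t < 0` squeezes every limit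
point of `∫ ⟪DP₀ g_k, φ⟫` between values of `t ↦ ∫ ⟪DP₀ (g + t φ), φ⟫`, which is continuous at
`0` by dominated convergence.
-/

section

variable {Ω E : Type*} [MeasurableSpace Ω] {μ : Measure Ω} [NormedAddCommGroup E]

theorem MeasureTheory.MemLp.norm_rpow_sub_one {p q : ℝ} (hpq : p.HolderConjugate q)
    {u : Ω → E} (hu : MemLp u (ENNReal.ofReal p) μ) :
    MemLp (fun x => ‖u x‖ ^ (p - 1)) (ENNReal.ofReal q) μ := by
  have h := hu.norm_rpow_div (ENNReal.ofReal (p - 1))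
  rwa [ENNReal.toReal_ofReal hpq.sub_one_pos.le, ← ENNReal.ofReal_div_of_pos hpq.sub_one_pos,
    ← hpq.conjugate_eq] at h

theorem MeasureTheory.MemLp.comp_of_norm_le_mul_rpow {p q c : ℝ} (hpq : p.HolderConjugate q)
    {E' : Type*} [NormedAddCommGroup E'] {F : E → E'} (hF : Continuous F)
    (hgrowth : ∀ G, ‖F G‖ ≤ c * ‖G‖ ^ (p - 1))
    {u : Ω → E} (hu : MemLp u (ENNReal.ofReal p) μ) :
    MemLp (fun x => F (u x)) (ENNReal.ofReal q) μ :=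
  (hu.norm_rpow_sub_one hpq).of_le_mul (hF.comp_aestronglyMeasurable hu.1) <|
    .of_forall fun x => by
      simpa [abs_of_nonneg (Real.rpow_nonneg (norm_nonneg (u x)) _)] using hgrowth (u x)

variable [InnerProductSpace ℝ E]

theorem MeasureTheory.MemLp.integrable_inner {p q : ENNReal} [ENNReal.HolderTriple p q 1]
    {u v : Ω → E} (hu : MemLp u p μ) (hv : MemLp v q μ) :
    Integrable (fun x => ⟪u x, v x⟫) μ :=
  memLp_one_iff_integrable.1 <| hu.of_bilin (fun a b => ⟪a, b⟫) 1 hv (hu.1.inner hv.1)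
    (.of_forall fun x => by simpa using nnnorm_inner_le_nnnorm (u x) (v x))

theorem ConvexOn.inner_gradient_sub_nonneg [CompleteSpace E] {f : E → ℝ} {f' : E → E}
    (hf : ConvexOn ℝ Set.univ f) (hf' : ∀ x, HasGradientAt f (f' x) x) (a b : E) :
    0 ≤ ⟪f' a - f' b, a - b⟫ := by
  set L : ℝ →ᵃ[ℝ] E := AffineMap.lineMap b a
  have hfL : ∀ t : ℝ, HasDerivAt (f ∘ L) ⟪f' (L t), a - b⟫ t := fun t => by
    simpa using (hf' (L t)).hasFDerivAt.comp_hasDerivAt t AffineMap.hasDerivAt_lineMap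
  have hconv : ConvexOn ℝ Set.univ (f ∘ L) := by simpa using hf.comp_affineMap L
  have h0 := hconv.le_slope_of_hasDerivAt (Set.mem_univ 0) (Set.mem_univ 1) one_pos (hfL 0)
  have h1 := hconv.slope_le_of_hasDerivAt (Set.mem_univ 0) (Set.mem_univ 1) one_pos (hfL 1)
  simp only [L, AffineMap.lineMap_apply_zero, AffineMap.lineMap_apply_one] at h0 h1
  rw [inner_sub_left]
  linarith

theorem mul_integral_inner_comp_le_of_monotone {p q c : ℝ} (hpq : p.HolderConjugate q)
    {F : E → E} (hF : Continuous F) (hgrowth : ∀ G, ‖F G‖ ≤ c * ‖G‖ ^ (p - 1))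
    (hmono : ∀ a b, 0 ≤ ⟪F a - F b, a - b⟫) {u v φ : Ω → E}
    (hu : MemLp u (ENNReal.ofReal p) μ) (hv : MemLp v (ENNReal.ofReal p) μ)
    (hφ : MemLp φ (ENNReal.ofReal p) μ) (t : ℝ) :
    t * ∫ x, ⟪F (u x), φ x⟫ ∂μ ≤
      (∫ x, ⟪F (u x), u x - v x⟫ ∂μ - ∫ x, ⟪F (v x + t • φ x), u x - v x⟫ ∂μ) +
        t * ∫ x, ⟪F (v x + t • φ x), φ x⟫ ∂μ := by
  have := hpq.symm.ennrealOfReal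
  have hw : MemLp (fun x => v x + t • φ x) (ENNReal.ofReal p) μ := hv.add (hφ.const_smul t)
  have hFu := hu.comp_of_norm_le_mul_rpow hpq hF hgrowth
  have hFw := hw.comp_of_norm_le_mul_rpow hpq hF hgrowth
  have hsplit : ∀ x, ⟪F (u x) - F (v x + t • φ x), u x - (v x + t • φ x)⟫ =
      (⟪F (u x), u x - v x⟫ - ⟪F (v x + t • φ x), u x - v x⟫ +
        t * ⟪F (v x + t • φ x), φ x⟫) - t * ⟪F (u x), φ x⟫ := fun x => by
    simp only [sub_add_eq_sub_sub, inner_sub_left, inner_sub_right, real_inner_smul_right]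
    ring
  have h : 0 ≤ ∫ x, ⟪F (u x) - F (v x + t • φ x), u x - (v x + t • φ x)⟫ ∂μ :=
    integral_nonneg fun x => hmono _ _
  simp only [hsplit] at h
  have i₁ : Integrable (fun x => ⟪F (u x), u x - v x⟫) μ := hFu.integrable_inner (hu.sub hv)
  have i₂ : Integrable (fun x => ⟪F (v x + t • φ x), u x - v x⟫) μ :=
    hFw.integrable_inner (hu.sub hv)
  have i₃ := (hFw.integrable_inner hφ).const_mul t
  have i₄ := (hFu.integrable_inner hφ).const_mul t
  rw [integral_sub (by exact (i₁.sub i₂).add i₃) i₄, integral_add (by exact i₁.sub i₂) i₃,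
    integral_sub i₁ i₂, integral_const_mul, integral_const_mul] at h
  linarith

theorem continuousAt_integral_inner_comp_add_smul {p q c : ℝ} (hpq : p.HolderConjugate q)
    {F : E → E} (hF : Continuous F) (hgrowth : ∀ G, ‖F G‖ ≤ c * ‖G‖ ^ (p - 1)) {v φ : Ω → E}
    (hv : MemLp v (ENNReal.ofReal p) μ) (hφ : MemLp φ (ENNReal.ofReal p) μ) :
    ContinuousAt (fun t : ℝ => ∫ x, ⟪F (v x + t • φ x), φ x⟫ ∂μ) 0 := by
  have := hpq.symm.ennrealOfReal
  have hp : 0 ≤ p - 1 := hpq.sub_one_pos.le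
  have hgrowth' : ∀ G, ‖F G‖ ≤ |c| * ‖G‖ ^ (p - 1) := fun G =>
    (hgrowth G).trans (mul_le_mul_of_nonneg_right (le_abs_self c) (by positivity))
  set V : Ω → ℝ := fun x => ‖v x‖ + ‖φ x‖
  have hV : MemLp V (ENNReal.ofReal p) μ := hv.norm.add hφ.norm
  refine continuousAt_of_dominated (bound := fun x => |c| * (‖V x‖ ^ (p - 1) * ‖φ x‖))
    (.of_forall fun t => ?_) ?_ (((hV.norm_rpow_sub_one hpq).integrable_mul hφ.norm).const_mul _)
    (.of_forall fun x => ?_)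
  · exact (((hv.add (hφ.const_smul t)).comp_of_norm_le_mul_rpow hpq hF hgrowth).integrable_inner
      hφ).1
  · filter_upwards [Icc_mem_nhds (neg_lt_zero.2 one_pos) one_pos] with t ht
    refine .of_forall fun x => ?_
    have hw : ‖v x + t • φ x‖ ≤ ‖V x‖ := calc
      ‖v x + t • φ x‖ ≤ ‖v x‖ + |t| * ‖φ x‖ :=
        (norm_add_le _ _).trans_eq (by rw [norm_smul, Real.norm_eq_abs])
      _ ≤ ‖v x‖ + ‖φ x‖ := by gcongr; exact mul_le_of_le_one_left (norm_nonneg _) (abs_le.2 ht)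
      _ = ‖V x‖ := (Real.norm_of_nonneg (by positivity)).symm
    calc ‖⟪F (v x + t • φ x), φ x⟫‖ ≤ ‖F (v x + t • φ x)‖ * ‖φ x‖ := norm_inner_le_norm _ _
      _ ≤ |c| * ‖v x + t • φ x‖ ^ (p - 1) * ‖φ x‖ := by gcongr; exact hgrowth' _
      _ ≤ |c| * (‖V x‖ ^ (p - 1) * ‖φ x‖) := by rw [← mul_assoc]; gcongr
  · exact ((hF.comp (continuous_const.add (continuous_id.smul continuous_const))).inner
      continuous_const).continuousAt

theorem tendsto_integral_inner_sub_of_weakly {ι : Type*} {l : Filter ι} {p q : ℝ}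
    (hpq : p.HolderConjugate q) {g : ι → Ω → E} {g' ψ : Ω → E}
    (hg : ∀ i, MemLp (g i) (ENNReal.ofReal p) μ) (hg' : MemLp g' (ENNReal.ofReal p) μ)
    (hψ : MemLp ψ (ENNReal.ofReal q) μ)
    (hweak : Tendsto (fun i => ∫ x, ⟪g i x, ψ x⟫ ∂μ) l (𝓝 (∫ x, ⟪g' x, ψ x⟫ ∂μ))) :
    Tendsto (fun i => ∫ x, ⟪ψ x, g i x - g' x⟫ ∂μ) l (𝓝 0) := by
  have := hpq.symm.ennrealOfReal
  have h (i : ι) : ∫ x, ⟪ψ x, g i x - g' x⟫ ∂μ =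
      ∫ x, ⟪g i x, ψ x⟫ ∂μ - ∫ x, ⟪g' x, ψ x⟫ ∂μ := by
    rw [← integral_sub ((hg i).integrable_inner hψ) (hg'.integrable_inner hψ)]
    congr 1 with x
    rw [real_inner_comm, inner_sub_left]
  simpa [h] using hweak.sub_const (∫ x, ⟪g' x, ψ x⟫ ∂μ)

end

theorem eventually_lt_of_forall_mul_le_add_mul {ι : Type*} {l : Filter ι} {a : ι → ℝ}
    {I : ℝ → ℝ} {e : ℝ → ι → ℝ} (he : ∀ t, Tendsto (e t) l (𝓝 0)) (hI : ContinuousAt I 0)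
    (h : ∀ t i, t * a i ≤ e t i + t * I t) : ∀ b > I 0, ∀ᶠ i in l, a i < b := by
  intro b hb
  obtain ⟨t, ht, hIt⟩ : ∃ t > 0, I t < (I 0 + b) / 2 :=
    (((hI.eventually (gt_mem_nhds (by linarith))).filter_mono nhdsWithin_le_nhds).and
      (self_mem_nhdsWithin (s := Set.Ioi 0))).exists.imp fun t h => ⟨h.2, h.1⟩
  filter_upwards [(he t).eventually (gt_mem_nhds (by nlinarith : 0 < t * ((b - I 0) / 2)))]
    with i hi
  nlinarith [h t i]

theorem tendsto_of_forall_mul_le_add_mul {ι : Type*} {l : Filter ι} {a : ι → ℝ} {I : ℝ → ℝ}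
    {e : ℝ → ι → ℝ} (he : ∀ t, Tendsto (e t) l (𝓝 0)) (hI : ContinuousAt I 0)
    (h : ∀ t i, t * a i ≤ e t i + t * I t) : Tendsto a l (𝓝 (I 0)) := by
  refine tendsto_order.2 ⟨fun b hb => ?_, eventually_lt_of_forall_mul_le_add_mul he hI h⟩
  have hI' : ContinuousAt (fun t => -I (-t)) 0 :=
    (hI.comp_of_eq continuous_neg.continuousAt neg_zero).neg
  have := eventually_lt_of_forall_mul_le_add_mul (a := fun i => -a i) (fun t => he (-t)) hI'
    (fun t i => by simpa using h (-t) i) (-b) (by simpa using hb)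
  simpa using this

theorem stmt_5_general {Ω : Type*} [MeasurableSpace Ω] (μ : Measure Ω)
    (d : ℕ) (p q c : ℝ) (hpq : p.HolderConjugate q)
    (P0 : EuclideanSpace ℝ (Fin d × Fin d × Fin d) → ℝ)
    (DP0 : EuclideanSpace ℝ (Fin d × Fin d × Fin d) → EuclideanSpace ℝ (Fin d × Fin d × Fin d))
    (hP0conv : ConvexOn ℝ Set.univ P0)
    (hP0grad : ∀ G, HasGradientAt P0 (DP0 G) G)
    (hP0cont : Continuous DP0)
    (hgrowth : ∀ G, ‖DP0 G‖ ≤ c * ‖G‖ ^ (p - 1))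
    (g : ℕ → Ω → EuclideanSpace ℝ (Fin d × Fin d × Fin d))
    (g' : Ω → EuclideanSpace ℝ (Fin d × Fin d × Fin d))
    (hg : ∀ k, MemLp (g k) (ENNReal.ofReal p) μ)
    (hg' : MemLp g' (ENNReal.ofReal p) μ)
    (hweak : ∀ φ : Ω → EuclideanSpace ℝ (Fin d × Fin d × Fin d),
      MemLp φ (ENNReal.ofReal q) μ →
      Tendsto (fun k => ∫ x, ⟪g k x, φ x⟫ ∂μ) atTop (nhds (∫ x, ⟪g' x, φ x⟫ ∂μ)))
    (hMinty : Tendsto (fun k => ∫ x, ⟪DP0 (g k x), g' x - g k x⟫ ∂μ) atTop (nhds 0)) :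
    ∀ φ : Ω → EuclideanSpace ℝ (Fin d × Fin d × Fin d), MemLp φ (ENNReal.ofReal p) μ →
      Tendsto (fun k => ∫ x, ⟪DP0 (g k x), φ x⟫ ∂μ) atTop
        (nhds (∫ x, ⟪DP0 (g' x), φ x⟫ ∂μ)) := by
  intro φ hφ
  have hA : Tendsto (fun k => ∫ x, ⟪DP0 (g k x), g k x - g' x⟫ ∂μ) atTop (𝓝 0) := by
    simpa [← integral_neg, ← inner_neg_right] using hMinty.neg
  have hB (t : ℝ) :
      Tendsto (fun k => ∫ x, ⟪DP0 (g' x + t • φ x), g k x - g' x⟫ ∂μ) atTop (𝓝 0) :=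
    have hDP0 := (hg'.add (hφ.const_smul t)).comp_of_norm_le_mul_rpow hpq hP0cont hgrowth
    tendsto_integral_inner_sub_of_weakly hpq hg hg' hDP0 (hweak _ hDP0)
  have hkey (t : ℝ) (k : ℕ) := mul_integral_inner_comp_le_of_monotone hpq hP0cont hgrowth
    (hP0conv.inner_gradient_sub_nonneg hP0grad) (hg k) hg' hφ t
  simpa using tendsto_of_forall_mul_le_add_mul (fun t => by simpa using hA.sub (hB t))
    (continuousAt_integral_inner_comp_add_smul hpq hP0cont hgrowth hg' hφ) hkey

/-- Minty trick: Let `P₀ : ℝ^{d×d×d} → ℝ` be convex and continuously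
differentiable with gradient `DP₀` satisfying `|DP₀(G)| ≤ c|G|^{p-1}`, `p > d`. If
`g_k = ∇²y_k ⇀ g = ∇²y` weakly in `L^p(Ω; ℝ^{d×d×d})` (weak convergence tested against
all `L^{p'}` functions, `p'` the conjugate exponent) and
`∫ ⟨DP₀(g_k), g − g_k⟩ → 0`, then `DP₀(g_k) ⇀ DP₀(g)` weakly in `L^{p'}(Ω; ℝ^{d×d×d})`. -/
theorem stmt_5 {Ω : Type*} [MeasurableSpace Ω] (μ : Measure Ω)
    (d : ℕ) (hd : 1 ≤ d) (p q c : ℝ) (hpd : (d : ℝ) < p) (hpq : p.HolderConjugate q)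
    (P0 : EuclideanSpace ℝ (Fin d × Fin d × Fin d) → ℝ)
    (DP0 : EuclideanSpace ℝ (Fin d × Fin d × Fin d) → EuclideanSpace ℝ (Fin d × Fin d × Fin d))
    (hP0conv : ConvexOn ℝ Set.univ P0)
    (hP0grad : ∀ G, HasGradientAt P0 (DP0 G) G)
    (hP0cont : Continuous DP0)
    (hgrowth : ∀ G, ‖DP0 G‖ ≤ c * ‖G‖ ^ (p - 1))
    (g : ℕ → Ω → EuclideanSpace ℝ (Fin d × Fin d × Fin d))
    (g' : Ω → EuclideanSpace ℝ (Fin d × Fin d × Fin d))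
    (hg : ∀ k, MemLp (g k) (ENNReal.ofReal p) μ)
    (hg' : MemLp g' (ENNReal.ofReal p) μ)
    (hweak : ∀ φ : Ω → EuclideanSpace ℝ (Fin d × Fin d × Fin d),
      MemLp φ (ENNReal.ofReal q) μ →
      Tendsto (fun k => ∫ x, ⟪g k x, φ x⟫ ∂μ) atTop (nhds (∫ x, ⟪g' x, φ x⟫ ∂μ)))
    (hMinty : Tendsto (fun k => ∫ x, ⟪DP0 (g k x), g' x - g k x⟫ ∂μ) atTop (nhds 0)) :
    ∀ φ : Ω → EuclideanSpace ℝ (Fin d × Fin d × Fin d), MemLp φ (ENNReal.ofReal p) μ →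
      Tendsto (fun k => ∫ x, ⟪DP0 (g k x), φ x⟫ ∂μ) atTop
        (nhds (∫ x, ⟪DP0 (g' x), φ x⟫ ∂μ)) :=
  stmt_5_general μ d p q c hpq P0 DP0 hP0conv hP0grad hP0cont hgrowth g g' hg hg' hweak hMinty
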